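/- Let n = |F| and let C ⊆ F^n be the full-length Reed-Solomon code of dimension k = n − n/|B| with evaluation points α_1,...,α_n enumerating F. Let I = {1,...,r}, let ζ_1,...,ζ_t be a basis of F over B, and let δ_1,...,δ_r ∈ F be nonzero elements satisfying tr_{F/B}((δ_ℓ/δ_j)·(α_s − α_j)/(α_j − α_ℓ)) = 0 for all 1 ≤ j ≤ r, all ℓ with j < ℓ ≤ r, and all s with j < s ≤ r. For each i ∈ {1,...,r}, define M_i ∈ F^{n×t} by M_i[j,w] = (δ_i/(α_j − α_i))·tr_{F/B}((ζ_w/δ_i)·(α_j − α_i)) for j ≠ i, and M_i[i,w] = ζ_w. Then the concatenated matrix M = [M_1 | M_2 | ··· | M_r] ∈ F^{n×rt} satisfies: every column of M lies in C^⊥, and M[I,:]·x ≠ 0 for every nonzero x ∈ B^{rt}; that is, M is a multiple-repair matrix for I. -/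

import Mathlib

/-- The Reed-Solomon code of dimension `k` with evaluation points `α 0, …, α (n-1)`. -/
def rsCode {F : Type*} [Field F] {n : ℕ} (k : ℕ) (α : Fin n → F) : Set (Fin n → F) :=
  {v | ∃ f : Polynomial F, f.degree < (k : ℕ) ∧ ∀ i, v i = f.eval (α i)}

/-- The field trace of `F` over a subfield `B` of index `t`, viewed with values in `F`:
`tr(x) = ∑_{m=0}^{t-1} x^(|B|^m)`. -/
def fieldTrace (B : Type*) {F : Type*} [Field B] [Field F] [Fintype B] [Algebra B F]
    (t : ℕ) (x : F) : F :=
  ∑ m ∈ Finset.range t, x ^ (Fintype.card B) ^ m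

/-!
Column `(i, w)` of `M` evaluates at `α` the polynomial
`δ_i ∑_{m<t} (ζ_w/δ_i)^(q^m) (X - α_i)^(q^m - 1)` (`q = |B|`), of degree `q^(t-1) - 1`; times a
codeword polynomial it has degree `< |F| - 1`, so its sum over `F` vanishes.

For the second claim put `μ_i = ∑_w x_{i,w} ζ_w`; row `j` of `M[I,:]·x` is
`μ_j + ∑_{i ≠ j} δ_i/(α_j - α_i) · tr((μ_i/δ_i)(α_j - α_i))`. Multiplying it by `(α_s - α_j)/δ_j` and
taking traces, the trace hypothesis (for `i > j`) and induction on `j` (for `i < j`) give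
`tr((μ_j/δ_j)(α_s - α_j)) = 0` for all `s > j`. Then row `j` and downward induction on `j` give
`μ_j = 0`, hence `x = 0` since `ζ` is a basis.
-/

open Finset Polynomial

theorem fieldTrace_finrank_eq_algebraMap_trace {B F : Type*} [Field B] [Field F] [Fintype B]
    [Finite F] [Algebra B F] (x : F) :
    fieldTrace B (Module.finrank B F) x = algebraMap B F (Algebra.trace B F x) := by
  rw [FiniteField.algebraMap_trace_eq_sum_pow, fieldTrace, Nat.card_eq_fintype_card]

section SumEval

variable {K : Type*} [Field K] [Fintype K]

theorem sum_eval_eq_zero_of_natDegree_lt {P : K[X]} (hP : P.natDegree < Fintype.card K - 1) :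
    ∑ x, P.eval x = 0 := by
  simp_rw [eval_eq_sum_range]
  rw [sum_comm]
  refine sum_eq_zero fun m hm => ?_
  rw [← mul_sum, FiniteField.sum_pow_lt_card_sub_one K m (by grind), mul_zero]

theorem sum_mul_eval_eq_zero_of_mem_rsCode {n k : ℕ} {α : Fin n → K}
    (hα : Function.Bijective α) {c : Fin n → K} (hc : c ∈ rsCode k α) {g : K[X]}
    (hg : k + g.natDegree < Fintype.card K) : ∑ j, c j * g.eval (α j) = 0 := by
  obtain ⟨f, hf, hcf⟩ := hc
  simp_rw [hcf, ← eval_mul]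
  rw [Fintype.sum_bijective α hα _ (fun x => (f * g).eval x) fun _ => rfl]
  rcases eq_or_ne f 0 with rfl | hf0
  · simp
  · apply sum_eval_eq_zero_of_natDegree_lt
    have := (natDegree_lt_iff_degree_lt hf0).mpr hf
    have := natDegree_mul_le (p := f) (q := g)
    omega

end SumEval

section RepairPoly

variable (B : Type*) [Fintype B] {F : Type*} [Field F] (t : ℕ) (δ c a : F)

noncomputable def repairPoly : F[X] :=
  ∑ m ∈ range t, C (δ * (c / δ) ^ Fintype.card B ^ m) * (X - C a) ^ (Fintype.card B ^ m - 1)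

variable [Field B]

theorem natDegree_repairPoly_le :
    (repairPoly B t δ c a).natDegree ≤ Fintype.card B ^ (t - 1) - 1 := by
  refine natDegree_sum_le_of_forall_le _ _ fun m hm => (natDegree_C_mul_le _ _).trans ?_
  rw [natDegree_pow, natDegree_X_sub_C, mul_one]
  gcongr
  · exact Fintype.card_pos
  · have := mem_range.mp hm
    omega

theorem repairPoly_eval_self (ht : 0 < t) (hδ : δ ≠ 0) : (repairPoly B t δ c a).eval a = c := by
  rw [repairPoly, eval_finsetSum, sum_eq_single_of_mem 0 (mem_range.2 ht)]
  · simp [mul_div_cancel₀ c hδ]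
  · intro m _ hm
    have : 1 < Fintype.card B ^ m := Nat.one_lt_pow hm Fintype.one_lt_card
    simp [zero_pow (Nat.sub_ne_zero_of_lt this)]

variable [Algebra B F]

theorem repairPoly_eval_mul_sub (x : F) :
    (repairPoly B t δ c a).eval x * (x - a) = δ * fieldTrace B t (c / δ * (x - a)) := by
  simp only [repairPoly, fieldTrace, eval_finsetSum, eval_mul, eval_C, eval_pow, eval_sub, eval_X,
    sum_mul, mul_sum]
  refine sum_congr rfl fun m _ => ?_
  rw [mul_assoc, ← pow_succ, Nat.sub_add_cancel (Nat.one_le_pow _ _ Fintype.card_pos), mul_pow,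
    mul_assoc]

theorem repairPoly_eval_of_ne {x : F} (hx : x ≠ a) :
    (repairPoly B t δ c a).eval x = δ / (x - a) * fieldTrace B t (c / δ * (x - a)) := by
  rw [div_mul_eq_mul_div, eq_div_iff (sub_ne_zero.2 hx), repairPoly_eval_mul_sub]

theorem sum_mul_eval_repairPoly_eq_zero [Fintype F] {n : ℕ} {α : Fin n → F}
    (hα : Function.Bijective α) {v : Fin n → F}
    (hv : v ∈ rsCode (Fintype.card F - Fintype.card F / Fintype.card B) α) :
    ∑ j, v j * (repairPoly B (Module.finrank B F) δ c a).eval (α j) = 0 := by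
  refine sum_mul_eval_eq_zero_of_mem_rsCode hα hv ?_
  have hdeg := natDegree_repairPoly_le B (Module.finrank B F) δ c a
  have hle := Nat.le_mul_of_pos_right (Fintype.card B ^ (Module.finrank B F - 1))
    (Fintype.card_pos (α := B))
  set q := Fintype.card B
  have hF : Fintype.card F = q ^ (Module.finrank B F - 1) * q := by
    rw [← pow_succ, Nat.sub_add_cancel Module.finrank_pos, Module.card_eq_pow_finrank (K := B)]
  have hpos : 0 < q ^ (Module.finrank B F - 1) := Nat.pow_pos Fintype.card_pos
  rw [hF, Nat.mul_div_cancel _ Fintype.card_pos]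
  omega

end RepairPoly

section RepairRow

variable {B F : Type*} [CommRing B] [Field F] [Algebra B F] (T : F →ₗ[B] B) {r : ℕ}
  (a δ μ : Fin r → F)

def repairRow (j : Fin r) : F :=
  μ j + ∑ i ∈ univ.erase j, δ i / (a j - a i) * algebraMap B F (T (μ i / δ i * (a j - a i)))

variable {T a δ μ}

theorem apply_eq_zero_of_repairRow_eq_zero
    (hT : ∀ j ℓ s, j < ℓ → j < s → T (δ ℓ / δ j * ((a s - a j) / (a j - a ℓ))) = 0)
    (hrow : ∀ j, repairRow T a δ μ j = 0) {j s : Fin r} (hjs : j < s) :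
    T (μ j / δ j * (a s - a j)) = 0 := by
  induction j using WellFoundedLT.induction generalizing s with
  | ind j ih =>
  have key : T (repairRow T a δ μ j * ((a s - a j) / δ j)) = 0 := by
    rw [hrow, zero_mul, map_zero]
  have hterm : ∀ i ∈ univ.erase j, T (δ i / (a j - a i) *
      algebraMap B F (T (μ i / δ i * (a j - a i))) * ((a s - a j) / δ j)) = 0 := by
    intro i hi
    have hscale : ∀ τ : B, δ i / (a j - a i) * algebraMap B F τ * ((a s - a j) / δ j) =
        τ • (δ i / δ j * ((a s - a j) / (a j - a i))) := fun τ => by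
      rw [Algebra.smul_def]; ring
    rw [hscale, map_smul, smul_eq_mul]
    rcases lt_or_gt_of_ne (ne_of_mem_erase hi) with hij | hji
    · rw [ih i hij hij, zero_mul]
    · rw [hT j i s hji hjs, mul_zero]
  rw [repairRow, add_mul, sum_mul, map_add, map_sum, sum_eq_zero hterm, add_zero] at key
  convert key using 2
  ring

theorem eq_zero_of_repairRow_eq_zero
    (hT : ∀ j ℓ s, j < ℓ → j < s → T (δ ℓ / δ j * ((a s - a j) / (a j - a ℓ))) = 0)
    (hrow : ∀ j, repairRow T a δ μ j = 0) : μ = 0 := by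
  funext j
  induction j using WellFoundedGT.induction with
  | ind j ih =>
  have hterm : ∀ i ∈ univ.erase j,
      δ i / (a j - a i) * algebraMap B F (T (μ i / δ i * (a j - a i))) = 0 := by
    intro i hi
    rcases lt_or_gt_of_ne (ne_of_mem_erase hi) with hij | hji
    · rw [apply_eq_zero_of_repairRow_eq_zero hT hrow hij, map_zero, mul_zero]
    · rw [ih i hji, Pi.zero_apply, zero_div, zero_mul, map_zero, map_zero, mul_zero]
  simpa [repairRow, sum_eq_zero hterm] using hrow j

theorem sum_mul_algebraMap_eq_repairRow {t : ℕ} (ζ : Fin t → F) (N : Fin r → Fin r × Fin t → F)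
    (hN : ∀ j i w, N j (i, w) = if j = i then ζ w
      else δ i / (a j - a i) * algebraMap B F (T (ζ w / δ i * (a j - a i))))
    (x : Fin r × Fin t → B) (j : Fin r) :
    ∑ p, N j p * algebraMap B F (x p) = repairRow T a δ (fun i => ∑ w, x (i, w) • ζ w) j := by
  rw [Fintype.sum_prod_type, ← add_sum_erase _ _ (mem_univ j), repairRow]
  congr 1
  · simp [hN, Algebra.smul_def, mul_comm]
  · refine sum_congr rfl fun i hi => ?_
    simp only [hN, if_neg (ne_of_mem_erase hi).symm, sum_div, sum_mul, map_sum, mul_sum]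
    refine sum_congr rfl fun w _ => ?_
    rw [smul_div_assoc, smul_mul_assoc, map_smul, smul_eq_mul, map_mul (algebraMap B F)]
    ring

end RepairRow

/-- Let `n = |F|`, `C ⊆ F^n` the full-length Reed-Solomon code of
dimension `k = n - n/|B|`, `I = {1,…,r}` (the first `r` indices), `ζ` a basis of `F`
over `B`, and nonzero `δ_1, …, δ_r` satisfying
`tr((δ_ℓ/δ_j)·(α_s - α_j)/(α_j - α_ℓ)) = 0` for all `j < ℓ ≤ r` and `j < s ≤ r`.
With `M_i[j,w] = (δ_i/(α_j - α_i))·tr((ζ_w/δ_i)·(α_j - α_i))` for `j ≠ i` and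
`M_i[i,w] = ζ_w`, the concatenated matrix `M = [M_1 | ⋯ | M_r] ∈ F^{n × rt}`
(columns indexed by pairs `(i,w)`) has all columns in the dual code `C^⊥` and
satisfies `M[I,:]·x ≠ 0` for all nonzero `x ∈ B^{rt}`; i.e. `M` is a multiple-repair
matrix for `I`. -/
theorem concatenated_matrix_is_multiple_repair_matrix
    {B F : Type*} [Field B] [Field F] [Fintype B] [Fintype F] [Algebra B F]
    {n t r k : ℕ} (ht : Module.finrank B F = t)
    (hn : n = Fintype.card F)
    (α : Fin n → F) (hα : Function.Bijective α)
    (hk : k = n - n / Fintype.card B)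
    (hrn : r ≤ n)
    (ζ : Module.Basis (Fin t) B F)
    (δ : Fin r → F) (hδ : ∀ i, δ i ≠ 0)
    (htr : ∀ j ℓ s : Fin r, j < ℓ → j < s →
      fieldTrace B t ((δ ℓ / δ j) *
        ((α (Fin.castLE hrn s) - α (Fin.castLE hrn j)) /
          (α (Fin.castLE hrn j) - α (Fin.castLE hrn ℓ)))) = 0)
    (M : Fin n → Fin r × Fin t → F)
    (hM : ∀ (j : Fin n) (i : Fin r) (w : Fin t),
      M j (i, w) =
        if j = Fin.castLE hrn i then ζ w
        else (δ i / (α j - α (Fin.castLE hrn i))) *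
          fieldTrace B t ((ζ w / δ i) * (α j - α (Fin.castLE hrn i)))) :
    (∀ p : Fin r × Fin t, ∀ c ∈ rsCode k α, ∑ j, c j * M j p = 0) ∧
    (∀ x : Fin r × Fin t → B, x ≠ 0 →
      ∃ i : Fin r, ∑ p, M (Fin.castLE hrn i) p * algebraMap B F (x p) ≠ 0) := by
  have htrace (y : F) : fieldTrace B t y = algebraMap B F (Algebra.trace B F y) :=
    ht ▸ fieldTrace_finrank_eq_algebraMap_trace y
  refine ⟨fun ⟨i, w⟩ c hc => ?_, fun x hx => ?_⟩
  · have hcol (j : Fin n) : M j (i, w) =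
        (repairPoly B t (δ i) (ζ w) (α (Fin.castLE hrn i))).eval (α j) := by
      rw [hM]
      split_ifs with hj
      · rw [hj, repairPoly_eval_self B t _ _ _ (ht ▸ Module.finrank_pos) (hδ i)]
      · rw [repairPoly_eval_of_ne B t _ _ _ (hα.injective.ne hj)]
    simp_rw [hcol]
    subst hn hk ht
    exact sum_mul_eval_repairPoly_eq_zero B _ _ _ hα hc
  · by_contra! hrow
    have hμ := eq_zero_of_repairRow_eq_zero (T := Algebra.trace B F) (a := α ∘ Fin.castLE hrn)
      (fun j ℓ s hjℓ hjs => FaithfulSMul.algebraMap_injective B F <| by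
        simpa [htrace] using htr j ℓ s hjℓ hjs)
      fun j => (sum_mul_algebraMap_eq_repairRow ζ (fun j => M (Fin.castLE hrn j))
        (fun j i w => by simp [hM, htrace]) x j).symm.trans (hrow j)
    refine hx (funext fun ⟨i, w⟩ => ?_)
    exact Fintype.linearIndependent_iff.mp ζ.linearIndependent _ (congrFun hμ i) w
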